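/- arXiv:1307.3532 — 3 statements merged into one kernel-verified Lean document; each statement's English description precedes it below -/
import Mathlib

section
/- Let d ≥ 3 and f ∈ ℛ_d. Then M_f is closed under matrix multiplication (hence, being a K-linear subspace of Mat_r(K) containing the identity matrix, it is a K-subalgebra of Mat_r(K)), and every commutator satisfies (AB − BA)·∂f = 0 for A, B ∈ M_f, i.e., (AB−BA)∂ applied entrywise to f gives the zero vector. In particular, if ann_R(f)_1 = 0, then M_f is commutative. -/
open MvPolynomial

namespace Kleppe

noncomputable section

open scoped Classical

variable {K : Type*}

/-- The iterated partial-derivative operator `∂^β` applied to `f`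
(in the standard polynomial ring; char 0 identification of divided powers). -/
def derivMulti [CommSemiring K] {r : ℕ} (β : Fin r →₀ ℕ) (f : MvPolynomial (Fin r) K) :
    MvPolynomial (Fin r) K :=
  ∑ α ∈ f.support,
    if β ≤ α then
      MvPolynomial.monomial (α - β)
        ((∏ i : Fin r, (α i).descFactorial (β i)) • MvPolynomial.coeff α f)
    else 0

/-- The apolarity action `D(f)` of a differential operator `D ∈ R = K[∂_1,…,∂_r]`
on a polynomial `f ∈ ℛ = K[x_1,…,x_r]`; `∂_i` acts as `∂/∂x_i`. -/
def contract [CommSemiring K] {r : ℕ} (D f : MvPolynomial (Fin r) K) :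
    MvPolynomial (Fin r) K :=
  ∑ β ∈ D.support, MvPolynomial.coeff β D • derivMulti β f

/-- `(A∂)_i = Σ_k A_{ik} ∂_k`, as an element of `R`. -/
def rowOp [CommSemiring K] {r : ℕ} (A : Matrix (Fin r) (Fin r) K) (i : Fin r) :
    MvPolynomial (Fin r) K :=
  ∑ k : Fin r, A i k • X k

/-- The matrix space `M_f = {A | ∂_i·(A∂)_j − ∂_j·(A∂)_i ∈ ann_R f for all i,j}`. -/
def Mf [CommRing K] {r : ℕ} (f : MvPolynomial (Fin r) K) :
    Set (Matrix (Fin r) (Fin r) K) :=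
  {A | ∀ i j : Fin r, contract (X i * rowOp A j - X j * rowOp A i) f = 0}

/-- `γ_f(A)`: the unique homogeneous `g` of degree `d` with `∂_i g = (A∂)_i (f)` for all `i`
(defined by choice; junk value `0` if no such `g` exists). -/
def gammaf [CommRing K] {r : ℕ} (d : ℕ) (f : MvPolynomial (Fin r) K)
    (A : Matrix (Fin r) (Fin r) K) : MvPolynomial (Fin r) K :=
  if h : ∃ g : MvPolynomial (Fin r) K, g.IsHomogeneous d ∧
      ∀ i, contract (X i) g = contract (rowOp A i) f then h.choose else 0

/-- `R_e(g)`, the space of contractions of `g` by homogeneous operators of degree `e`. -/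
def partials [CommRing K] {r : ℕ} (e : ℕ) (g : MvPolynomial (Fin r) K) :
    Submodule K (MvPolynomial (Fin r) K) :=
  Submodule.span K {p | ∃ D : MvPolynomial (Fin r) K, D.IsHomogeneous e ∧ p = contract D g}

/-- `G` is (the set of components of) a regular splitting of `f`:
`f = Σ_{g ∈ G} g`, each `g` a nonzero degree-`d` form, and the spaces of
`(d−1)`-st partials `R_{d−1}(g)` are independent. -/
def IsRegSplit [CommRing K] {r : ℕ} (d : ℕ) (f : MvPolynomial (Fin r) K)
    (G : Set (MvPolynomial (Fin r) K)) : Prop :=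
  G.Finite ∧ G.Nonempty ∧ (∀ g ∈ G, g ≠ 0 ∧ g.IsHomogeneous d) ∧ (∑ᶠ g ∈ G, g) = f ∧
  ∀ g ∈ G, Disjoint (partials (d - 1) g) (⨆ h ∈ G \ {g}, partials (d - 1) h)

/-- A complete set of orthogonal idempotents in `M_f`. -/
def IsCoid [CommRing K] {r : ℕ} (f : MvPolynomial (Fin r) K)
    (E : Set (Matrix (Fin r) (Fin r) K)) : Prop :=
  E.Finite ∧ E ⊆ Mf f ∧ (∀ A ∈ E, A ≠ 0) ∧
  (∀ A ∈ E, ∀ B ∈ E, A ≠ B → A * B = 0) ∧ (∑ᶠ A ∈ E, A) = 1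

end

/-! Write `L_A^i = (A∂)_i = ∑ₖ A_ik ∂ₖ`; then `A ∈ M_f` says that `∂ₘ L_A^i f` is symmetric in
`m, i`. Because all these operators commute, for `A, B ∈ M_f` the third derivatives
`∂ₖ L_A^i L_B^j f` are symmetric in `i, j`, and by Euler's identity so is the form `L_A^i L_B^j f`,
whose degree `d - 2` is positive. As `∂ₘ L_{AB}^i f = L_A^i L_B^m f`, this symmetry is exactly
`AB ∈ M_f`, and it makes all partials of the degree-`(d - 1)` form `L_{AB}^i f - L_{BA}^i f`
vanish. When `ann_R(f)_1 = 0`, the rows of `AB - BA` are then zero. -/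

section PartialDerivatives

variable {σ R : Type*} [CommSemiring R] [Fintype σ]

noncomputable def dirDeriv (A : Matrix σ σ R) (i : σ) : Module.End R (MvPolynomial σ R) :=
  ∑ k, A i k • (pderiv k).toLinearMap

theorem dirDeriv_apply (A : Matrix σ σ R) (i : σ) (f : MvPolynomial σ R) :
    dirDeriv A i f = ∑ k, A i k • pderiv k f := by
  simp [dirDeriv]

theorem dirDeriv_mul (A B : Matrix σ σ R) (i : σ) (f : MvPolynomial σ R) :
    dirDeriv (A * B) i f = ∑ l, A i l • dirDeriv B l f := by
  simp only [dirDeriv_apply, Matrix.mul_apply, Finset.sum_smul, Finset.smul_sum, smul_smul]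
  exact Finset.sum_comm

theorem _root_.MvPolynomial.IsHomogeneous.dirDeriv {f : MvPolynomial σ R} {n : ℕ}
    (hf : f.IsHomogeneous n) (A : Matrix σ σ R) (i : σ) :
    (dirDeriv A i f).IsHomogeneous (n - 1) := by
  rw [dirDeriv_apply]
  exact (homogeneousSubmodule σ R (n - 1)).sum_mem fun k _ => Submodule.smul_mem _ _ hf.pderiv

end PartialDerivatives

section PartialDerivativesRing

variable {σ R : Type*} [CommRing R]

theorem pderiv_comm (i j : σ) (f : MvPolynomial σ R) :
    pderiv i (pderiv j f) = pderiv j (pderiv i f) := by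
  classical
  have : ⁅pderiv i, pderiv j⁆ = (0 : Derivation R (MvPolynomial σ R) (MvPolynomial σ R)) :=
    derivation_ext fun k => by
      rw [Derivation.commutator_apply]
      simp [pderiv_X, Pi.single_apply, apply_ite (pderiv _)]
  rw [← sub_eq_zero, ← Derivation.commutator_apply, this, Derivation.zero_apply]

variable [Fintype σ]

theorem _root_.MvPolynomial.IsHomogeneous.eq_zero_of_forall_pderiv_eq_zero [IsDomain R]
    [CharZero R] {f : MvPolynomial σ R} {n : ℕ} (hf : f.IsHomogeneous n) (hn : n ≠ 0)
    (h : ∀ i, pderiv i f = 0) : f = 0 := by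
  have euler := hf.sum_X_mul_pderiv
  simp only [h, mul_zero, Finset.sum_const_zero] at euler
  exact (smul_eq_zero.mp euler.symm).resolve_left hn

theorem pderiv_dirDeriv (A : Matrix σ σ R) (i j : σ) (f : MvPolynomial σ R) :
    pderiv i (dirDeriv A j f) = dirDeriv A j (pderiv i f) := by
  simp [dirDeriv_apply, pderiv_comm i]

theorem dirDeriv_comm (A B : Matrix σ σ R) (i j : σ) (f : MvPolynomial σ R) :
    dirDeriv A i (dirDeriv B j f) = dirDeriv B j (dirDeriv A i f) := by
  simp only [dirDeriv_apply B, map_sum, map_smul, ← pderiv_dirDeriv]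

theorem dirDeriv_sub (A B : Matrix σ σ R) (i : σ) (f : MvPolynomial σ R) :
    dirDeriv (A - B) i f = dirDeriv A i f - dirDeriv B i f := by
  simp only [dirDeriv_apply, Matrix.sub_apply, sub_smul, Finset.sum_sub_distrib]

end PartialDerivativesRing

section Contraction

variable {K : Type*} [CommSemiring K] {r : ℕ}

theorem coeff_derivMulti (β γ : Fin r →₀ ℕ) (f : MvPolynomial (Fin r) K) :
    coeff γ (derivMulti β f) =
      (∏ i, ((γ + β) i).descFactorial (β i)) • coeff (γ + β) f := by
  classical
  rw [derivMulti, coeff_sum, Finset.sum_eq_single (γ + β)]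
  · simp [coeff_monomial]
  · intro α _ hα
    split_ifs with hβα
    · rw [coeff_monomial, if_neg]
      contrapose! hα
      rw [← hα, tsub_add_cancel_of_le hβα]
    · exact coeff_zero γ
  · intro hγβ
    simp [notMem_support_iff.mp hγβ]

theorem derivMulti_add (β γ : Fin r →₀ ℕ) (f : MvPolynomial (Fin r) K) :
    derivMulti (β + γ) f = derivMulti β (derivMulti γ f) := by
  ext δ
  simp only [coeff_derivMulti, smul_smul, ← Finset.prod_mul_distrib, ← add_assoc]
  congr 1
  refine Finset.prod_congr rfl fun i _ => ?_
  simp only [Finsupp.add_apply]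
  rw [← Nat.descFactorial_mul_descFactorial (Nat.le_add_left (γ i) (β i)), Nat.add_sub_cancel,
    Nat.add_sub_cancel]

theorem derivMulti_single_one (i : Fin r) (f : MvPolynomial (Fin r) K) :
    derivMulti (Finsupp.single i 1) f = pderiv i f := by
  ext m
  rw [coeff_derivMulti, coeff_pderiv, Finset.prod_eq_single i]
  · simp [mul_comm]
  · intro j _ hj
    simp [hj.symm]
  · simp

theorem contract_eq_constr (D f : MvPolynomial (Fin r) K) :
    contract D f = (basisMonomials (Fin r) K).constr K (derivMulti · f) D := by
  rw [Module.Basis.constr_apply]; rfl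

theorem contract_monomial_one (β : Fin r →₀ ℕ) (f : MvPolynomial (Fin r) K) :
    contract (monomial β 1) f = derivMulti β f := by
  rw [contract_eq_constr, show monomial β 1 = basisMonomials (Fin r) K β from rfl,
    Module.Basis.constr_basis]

theorem contract_X (i : Fin r) (f : MvPolynomial (Fin r) K) :
    contract (X i) f = pderiv i f := by
  rw [X, contract_monomial_one, derivMulti_single_one]

theorem contract_X_mul_X (i j : Fin r) (f : MvPolynomial (Fin r) K) :
    contract (X i * X j) f = pderiv i (pderiv j f) := by
  rw [X, X, monomial_mul, one_mul, contract_monomial_one, derivMulti_add,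
    derivMulti_single_one, derivMulti_single_one]

theorem contract_rowOp (A : Matrix (Fin r) (Fin r) K) (i : Fin r) (f : MvPolynomial (Fin r) K) :
    contract (rowOp A i) f = dirDeriv A i f := by
  rw [rowOp, contract_eq_constr, map_sum, dirDeriv_apply]
  simp_rw [map_smul, ← contract_eq_constr, contract_X]

theorem contract_X_mul_rowOp (A : Matrix (Fin r) (Fin r) K) (i j : Fin r)
    (f : MvPolynomial (Fin r) K) :
    contract (X i * rowOp A j) f = pderiv i (dirDeriv A j f) := by
  rw [rowOp, Finset.mul_sum, contract_eq_constr, map_sum, dirDeriv_apply, map_sum]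
  simp_rw [mul_smul_comm, map_smul, ← contract_eq_constr, contract_X_mul_X, Derivation.map_smul]

theorem isHomogeneous_rowOp (A : Matrix (Fin r) (Fin r) K) (i : Fin r) :
    (rowOp A i).IsHomogeneous 1 :=
  (homogeneousSubmodule _ K 1).sum_mem fun k _ => Submodule.smul_mem _ _ (isHomogeneous_X K k)

theorem coeff_single_rowOp (A : Matrix (Fin r) (Fin r) K) (i k : Fin r) :
    coeff (Finsupp.single k 1) (rowOp A i) = A i k := by
  classical
  simp [rowOp, coeff_sum, coeff_X, Finsupp.single_left_inj]

end Contraction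

section Mf

variable {K : Type*} [CommRing K] {r : ℕ}

theorem contract_sub_left (D E f : MvPolynomial (Fin r) K) :
    contract (D - E) f = contract D f - contract E f := by
  simp only [contract_eq_constr, map_sub]

variable {f : MvPolynomial (Fin r) K} {A B : Matrix (Fin r) (Fin r) K}

theorem mem_Mf_iff :
    A ∈ Mf f ↔ ∀ i j, pderiv i (dirDeriv A j f) = pderiv j (dirDeriv A i f) :=
  forall₂_congr fun i j => by
    rw [contract_sub_left, contract_X_mul_rowOp, contract_X_mul_rowOp, sub_eq_zero]

theorem pderiv_dirDeriv_mul (hB : B ∈ Mf f) (i m : Fin r) :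
    pderiv m (dirDeriv (A * B) i f) = dirDeriv A i (dirDeriv B m f) := by
  rw [dirDeriv_mul, map_sum, dirDeriv_apply A]
  refine Finset.sum_congr rfl fun l _ => ?_
  rw [Derivation.map_smul, mem_Mf_iff.mp hB m l]

variable [IsDomain K] [CharZero K] {d : ℕ}

theorem dirDeriv_dirDeriv_symm (hd : 3 ≤ d) (hf : f.IsHomogeneous d) (hA : A ∈ Mf f)
    (hB : B ∈ Mf f) (i j : Fin r) :
    dirDeriv A i (dirDeriv B j f) = dirDeriv A j (dirDeriv B i f) := by
  rw [mem_Mf_iff] at hA hB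
  refine eq_of_sub_eq_zero <| IsHomogeneous.eq_zero_of_forall_pderiv_eq_zero
    (((hf.dirDeriv B j).dirDeriv A i).sub ((hf.dirDeriv B i).dirDeriv A j)) (by omega)
    fun k => ?_
  rw [map_sub, sub_eq_zero]
  calc pderiv k (dirDeriv A i (dirDeriv B j f))
      = dirDeriv A i (pderiv j (dirDeriv B k f)) := by rw [pderiv_dirDeriv A k i, hB k j]
    _ = dirDeriv B k (pderiv i (dirDeriv A j f)) := by
      rw [← pderiv_dirDeriv A j i, dirDeriv_comm, pderiv_dirDeriv B j k, hA j i]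
    _ = dirDeriv A j (pderiv i (dirDeriv B k f)) := by
      rw [← pderiv_dirDeriv B i k, dirDeriv_comm, pderiv_dirDeriv A i j]
    _ = pderiv k (dirDeriv A j (dirDeriv B i f)) := by rw [pderiv_dirDeriv A k j, hB k i]

theorem mul_mem_Mf (hd : 3 ≤ d) (hf : f.IsHomogeneous d) (hA : A ∈ Mf f) (hB : B ∈ Mf f) :
    A * B ∈ Mf f :=
  mem_Mf_iff.mpr fun i j => by
    rw [pderiv_dirDeriv_mul hB, pderiv_dirDeriv_mul hB]
    exact dirDeriv_dirDeriv_symm hd hf hA hB j i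

theorem dirDeriv_commutator_eq_zero (hd : 3 ≤ d) (hf : f.IsHomogeneous d) (hA : A ∈ Mf f)
    (hB : B ∈ Mf f) (i : Fin r) : dirDeriv (A * B - B * A) i f = 0 := by
  refine (hf.dirDeriv _ i).eq_zero_of_forall_pderiv_eq_zero (by omega) fun m => ?_
  rw [dirDeriv_sub, map_sub, pderiv_dirDeriv_mul hB, pderiv_dirDeriv_mul hA,
    dirDeriv_comm B A, dirDeriv_dirDeriv_symm hd hf hA hB, sub_self]

end Mf

/-- Proposition 2.11. Let `d ≥ 3` and `f ∈ ℛ_d`. Then `M_f` is closed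
under matrix multiplication, every commutator `AB − BA` of elements of `M_f` satisfies
`(AB − BA)∂f = 0` entrywise, and if `ann_R(f)_1 = 0` then `M_f` is commutative. -/
theorem Mf_mul_closed {K : Type*} [Field K] [CharZero K] {r d : ℕ} (hd : 3 ≤ d)
    (f : MvPolynomial (Fin r) K) (hf : f.IsHomogeneous d) :
    (∀ A ∈ Mf f, ∀ B ∈ Mf f, A * B ∈ Mf f) ∧
    (∀ A ∈ Mf f, ∀ B ∈ Mf f, ∀ i, contract (rowOp (A * B - B * A) i) f = 0) ∧
    ((∀ D : MvPolynomial (Fin r) K, D.IsHomogeneous 1 → contract D f = 0 → D = 0) →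
      ∀ A ∈ Mf f, ∀ B ∈ Mf f, A * B = B * A) := by
  have commutator_annihilates : ∀ A ∈ Mf f, ∀ B ∈ Mf f, ∀ i,
      contract (rowOp (A * B - B * A) i) f = 0 := fun A hA B hB i => by
    rw [contract_rowOp]
    exact dirDeriv_commutator_eq_zero hd hf hA hB i
  refine ⟨fun A hA B hB => mul_mem_Mf hd hf hA hB, commutator_annihilates,
    fun hann A hA B hB => ?_⟩
  rw [← sub_eq_zero]
  ext i k
  rw [Matrix.zero_apply, ← coeff_single_rowOp (A * B - B * A) i k,
    hann _ (isHomogeneous_rowOp _ i) (commutator_annihilates A hA B hB i), coeff_zero]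

end Kleppe
end

section
/- Let M ⊆ Mat_r(K) be a subset containing the identity matrix I. Then I(M) ⊆ Ǐ(M) = I(M²), where M² = {AB : A, B ∈ M}, and the graded pieces satisfy I(M)_e = Ǐ(M)_e for all e ≥ 3. In particular, if M is closed under matrix multiplication, then I(M) = Ǐ(M). -/
open MvPolynomial

namespace Kleppe

/-- The determinantal ideal `I(M) = Σ_{A ∈ M} I_2(∂ A∂)`, generated by the entries
`∂_i·(A∂)_j − ∂_j·(A∂)_i` for `A ∈ M`. -/
noncomputable def IM {K : Type*} [CommRing K] {r : ℕ} (M : Set (Matrix (Fin r) (Fin r) K)) :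
    Ideal (MvPolynomial (Fin r) K) :=
  Ideal.span {p | ∃ A ∈ M, ∃ i j : Fin r, p = X i * rowOp A j - X j * rowOp A i}

/-- The determinantal ideal `Ǐ(M) = Σ_{A,B ∈ M} I_2(A∂ B∂)`, generated by
`(A∂)_i·(B∂)_j − (A∂)_j·(B∂)_i` for `A, B ∈ M`. -/
noncomputable def IcheckM {K : Type*} [CommRing K] {r : ℕ} (M : Set (Matrix (Fin r) (Fin r) K)) :
    Ideal (MvPolynomial (Fin r) K) :=
  Ideal.span {p | ∃ A ∈ M, ∃ B ∈ M, ∃ i j : Fin r,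
    p = rowOp A i * rowOp B j - rowOp A j * rowOp B i}

/-!
Write `g_ij(A) = ∂_i(A∂)_j − ∂_j(A∂)_i` for the generators of `I(M)`. The generators of `Ǐ(M)`
satisfy `(A∂)_i(B∂)_j − (A∂)_j(B∂)_i + g_ij(AB) = Σ_k A_ik g_kj(B) − Σ_k A_jk g_ki(B)`, so modulo
`I({B})` they are, up to sign, the generators of `I(M²)`; with `1 ∈ M`, `I({B})` lies in both
`I(M) ⊆ Ǐ(M)` and `I(M²)`. Moreover
`∂_m ((A∂)_i(B∂)_j − (A∂)_j(B∂)_i) = (A∂)_i g_mj(B) − (A∂)_j g_mi(B) − (B∂)_m g_ij(A)`,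
so `(∂_1, …, ∂_r) Ǐ(M) ⊆ I(M)`; as `Ǐ(M)` is generated in degree `2`, its elements of degree
`e ≥ 3` lie in `(∂_1, …, ∂_r) Ǐ(M)`.
-/

section HomogeneousComponents

open DirectSum

attribute [local instance] MvPolynomial.gradedAlgebra

variable {σ R : Type*} [CommSemiring R]

theorem _root_.MvPolynomial.homogeneousComponent_mul_of_isHomogeneous
    (a : MvPolynomial σ R) {q : MvPolynomial σ R} {d e : ℕ} (hq : q.IsHomogeneous d)
    (hde : d ≤ e) : homogeneousComponent e (a * q) = homogeneousComponent (e - d) a * q := by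
  have hdecompose (b : MvPolynomial σ R) (n : ℕ) :
      (decompose (homogeneousSubmodule σ R) b n : MvPolynomial σ R) =
        homogeneousComponent n b :=
    decomposition.decompose'_apply b n
  simpa only [hdecompose] using
    coe_decompose_mul_of_right_mem_of_le (homogeneousSubmodule σ R) (a := a) hq hde

theorem _root_.MvPolynomial.IsHomogeneous.mem_span_range_X {p : MvPolynomial σ R} {n : ℕ}
    (hp : p.IsHomogeneous n) (hn : n ≠ 0) : p ∈ Ideal.span (Set.range X) := by
  rw [← Set.image_univ, mem_ideal_span_X_image]
  intro m hm
  have hm0 : m ≠ 0 := by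
    rintro rfl
    exact hn (hp (mem_support_iff.1 hm)).symm
  obtain ⟨i, hi⟩ := Finsupp.ne_iff.1 hm0
  exact ⟨i, Set.mem_univ i, hi⟩

/-- Taking the degree-`e` component of `p = ∑ c_q q` replaces each coefficient `c_q` by its
component of degree `e - d > 0`, which lies in the ideal of the variables. -/
theorem _root_.MvPolynomial.mem_span_range_X_mul_span_of_isHomogeneous
    {S : Set (MvPolynomial σ R)} {d e : ℕ} (hS : ∀ q ∈ S, q.IsHomogeneous d) (hde : d < e)
    {p : MvPolynomial σ R} (hp : p.IsHomogeneous e) (hpS : p ∈ Ideal.span S) :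
    p ∈ Ideal.span (Set.range X) * Ideal.span S := by
  obtain ⟨c, hcS, rfl⟩ := Submodule.mem_span_set.1 hpS
  rw [← homogeneousComponent_eq_self hp, Finsupp.sum, map_sum]
  refine Ideal.sum_mem _ fun q hq => ?_
  rw [smul_eq_mul, homogeneousComponent_mul_of_isHomogeneous _ (hS q (hcS hq)) hde.le]
  exact Ideal.mul_mem_mul
    ((homogeneousComponent_isHomogeneous _ _).mem_span_range_X (by omega))
    (Ideal.subset_span (hcS hq))

end HomogeneousComponents

theorem _root_.Set.image2_mul_eq_self {α : Type*} [MulOneClass α] {s : Set α} (h1 : 1 ∈ s)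
    (hmul : ∀ a ∈ s, ∀ b ∈ s, a * b ∈ s) : Set.image2 (· * ·) s s = s :=
  Set.Subset.antisymm (Set.image2_subset_iff.2 hmul) fun a ha => ⟨a, ha, 1, h1, mul_one a⟩

def twoMinor {R ι : Type*} [Mul R] [Sub R] (u v : ι → R) (i j : ι) : R :=
  u i * v j - u j * v i

section RowOp

variable {K : Type*} [CommSemiring K] {r : ℕ}

theorem rowOp_one (i : Fin r) : rowOp (1 : Matrix (Fin r) (Fin r) K) i = X i := by
  simp [rowOp, Matrix.one_apply, ite_smul]

theorem rowOp_mul (A B : Matrix (Fin r) (Fin r) K) (i : Fin r) :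
    rowOp (A * B) i = ∑ k, A i k • rowOp B k := by
  simp only [rowOp, Matrix.mul_apply, Finset.sum_smul, Finset.smul_sum, mul_smul]
  exact Finset.sum_comm

end RowOp

section Minors

variable {K : Type*} [CommRing K] {r : ℕ}

theorem isHomogeneous_twoMinor_rowOp (A B : Matrix (Fin r) (Fin r) K) (i j : Fin r) :
    (twoMinor (rowOp A) (rowOp B) i j).IsHomogeneous 2 :=
  ((isHomogeneous_rowOp A i).mul (isHomogeneous_rowOp B j)).sub
    ((isHomogeneous_rowOp A j).mul (isHomogeneous_rowOp B i))

theorem twoMinor_rowOp_add_twoMinor_rowOp_mul (A B : Matrix (Fin r) (Fin r) K) (i j : Fin r) :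
    twoMinor (rowOp A) (rowOp B) i j + twoMinor X (rowOp (A * B)) i j =
      ∑ k, A i k • twoMinor X (rowOp B) k j - ∑ k, A j k • twoMinor X (rowOp B) k i := by
  have hA (l : Fin r) : rowOp A l = ∑ k, A l k • X k := rfl
  simp only [twoMinor, rowOp_mul A B, hA, Finset.sum_mul, Finset.mul_sum, smul_mul_assoc,
    mul_smul_comm, smul_sub, Finset.sum_sub_distrib]
  abel

theorem X_mul_twoMinor_rowOp (A B : Matrix (Fin r) (Fin r) K) (i j m : Fin r) :
    X m * twoMinor (rowOp A) (rowOp B) i j =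
      rowOp A i * twoMinor X (rowOp B) m j - rowOp A j * twoMinor X (rowOp B) m i -
        rowOp B m * twoMinor X (rowOp A) i j := by
  simp only [twoMinor]
  ring

end Minors

section DeterminantalIdeals

variable {K : Type*} [CommRing K] {r : ℕ} {M : Set (Matrix (Fin r) (Fin r) K)}

theorem twoMinor_mem_IM {A : Matrix (Fin r) (Fin r) K} (hA : A ∈ M) (i j : Fin r) :
    twoMinor X (rowOp A) i j ∈ IM M :=
  Ideal.subset_span ⟨A, hA, i, j, rfl⟩

theorem twoMinor_mem_IcheckM {A B : Matrix (Fin r) (Fin r) K} (hA : A ∈ M) (hB : B ∈ M)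
    (i j : Fin r) : twoMinor (rowOp A) (rowOp B) i j ∈ IcheckM M :=
  Ideal.subset_span ⟨A, hA, B, hB, i, j, rfl⟩

theorem twoMinor_rowOp_add_twoMinor_rowOp_mul_mem_IM (A : Matrix (Fin r) (Fin r) K)
    {B : Matrix (Fin r) (Fin r) K} (hB : B ∈ M) (i j : Fin r) :
    twoMinor (rowOp A) (rowOp B) i j + twoMinor X (rowOp (A * B)) i j ∈ IM M := by
  rw [twoMinor_rowOp_add_twoMinor_rowOp_mul]
  exact sub_mem
    (Ideal.sum_mem _ fun k _ => Submodule.smul_of_tower_mem _ _ (twoMinor_mem_IM hB k j))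
    (Ideal.sum_mem _ fun k _ => Submodule.smul_of_tower_mem _ _ (twoMinor_mem_IM hB k i))

theorem IM_le_IcheckM_of_one_mem (h1 : 1 ∈ M) : IM M ≤ IcheckM M := by
  refine Ideal.span_le.2 ?_
  rintro _ ⟨A, hA, i, j, rfl⟩
  have h := twoMinor_mem_IcheckM h1 hA i j
  rwa [twoMinor, rowOp_one, rowOp_one] at h

theorem IcheckM_eq_IM_image2_mul (h1 : 1 ∈ M) : IcheckM M = IM (Set.image2 (· * ·) M M) := by
  have hM2 {B} (hB : B ∈ M) : B ∈ Set.image2 (· * ·) M M := ⟨B, hB, 1, h1, mul_one B⟩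
  refine le_antisymm (Ideal.span_le.2 ?_) (Ideal.span_le.2 ?_)
  · rintro _ ⟨A, hA, B, hB, i, j, rfl⟩
    have h := sub_mem (twoMinor_rowOp_add_twoMinor_rowOp_mul_mem_IM A (hM2 hB) i j)
      (twoMinor_mem_IM (Set.mem_image2_of_mem hA hB) i j)
    rwa [add_sub_cancel_right] at h
  · rintro _ ⟨_, ⟨A, hA, B, hB, rfl⟩, i, j, rfl⟩
    have hsum := IM_le_IcheckM_of_one_mem h1
      (twoMinor_rowOp_add_twoMinor_rowOp_mul_mem_IM A hB i j)
    have h := sub_mem hsum (twoMinor_mem_IcheckM hA hB i j)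
    rwa [add_sub_cancel_left] at h

theorem span_range_X_mul_IcheckM_le_IM : Ideal.span (Set.range X) * IcheckM M ≤ IM M := by
  rw [IcheckM, Ideal.span_mul_span', Ideal.span_le]
  rintro _ ⟨_, ⟨m, rfl⟩, _, ⟨A, hA, B, hB, i, j, rfl⟩, rfl⟩
  change X m * twoMinor (rowOp A) (rowOp B) i j ∈ IM M
  rw [X_mul_twoMinor_rowOp]
  exact sub_mem (sub_mem (Ideal.mul_mem_left _ _ (twoMinor_mem_IM hB m j))
    (Ideal.mul_mem_left _ _ (twoMinor_mem_IM hB m i)))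
    (Ideal.mul_mem_left _ _ (twoMinor_mem_IM hA i j))

theorem mem_IM_of_mem_IcheckM_of_isHomogeneous {p : MvPolynomial (Fin r) K} {e : ℕ}
    (hp : p.IsHomogeneous e) (he : 3 ≤ e) (hpM : p ∈ IcheckM M) : p ∈ IM M := by
  refine span_range_X_mul_IcheckM_le_IM
    (mem_span_range_X_mul_span_of_isHomogeneous (d := 2) ?_ he hp hpM)
  rintro _ ⟨A, -, B, -, i, j, rfl⟩
  exact isHomogeneous_twoMinor_rowOp A B i j

end DeterminantalIdeals

/-- Lemma 2.19. If `I ∈ M ⊆ Mat_r(K)`, then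
`I(M) ⊆ Ǐ(M) = I(M²)` and `I(M)_e = Ǐ(M)_e` for all `e ≥ 3`.
In particular, if `M` is closed under multiplication, then `I(M) = Ǐ(M)`. -/
theorem IM_le_IcheckM {K : Type*} [Field K] {r : ℕ}
    (M : Set (Matrix (Fin r) (Fin r) K)) (hM : (1 : Matrix (Fin r) (Fin r) K) ∈ M) :
    IM M ≤ IcheckM M ∧
    IcheckM M = IM (Set.image2 (· * ·) M M) ∧
    (∀ e : ℕ, 3 ≤ e → ∀ p : MvPolynomial (Fin r) K, p.IsHomogeneous e →
      (p ∈ IM M ↔ p ∈ IcheckM M)) ∧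
    ((∀ A ∈ M, ∀ B ∈ M, A * B ∈ M) → IM M = IcheckM M) := by
  refine ⟨IM_le_IcheckM_of_one_mem hM, IcheckM_eq_IM_image2_mul hM,
    fun e he p hp => ⟨fun h => IM_le_IcheckM_of_one_mem hM h,
      mem_IM_of_mem_IcheckM_of_isHomogeneous hp he⟩, fun hmul => ?_⟩
  rw [IcheckM_eq_IM_image2_mul hM, Set.image2_mul_eq_self hM hmul]

end Kleppe
end

section
/- Let M ⊆ Mat_r(K) be a commutative subalgebra containing the identity matrix I, let {E_1,…,E_n} be its unique maximal complete set of orthogonal idempotents, and for each i let M_i = E_iM and M_i^nil = {A ∈ M_i : A is nilpotent}. Then M_i = K·E_i ⊕ M_i^nil for every i if and only if K contains every eigenvalue of every matrix A ∈ M (i.e., the characteristic polynomial of each A ∈ M splits over K). -/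
open MvPolynomial

namespace Kleppe

/-- A complete set of orthogonal idempotents in a matrix algebra: a finite set of
nonzero, pairwise-orthogonal matrices summing to the identity. -/
def IsMatCoid {K : Type*} [CommRing K] {r : ℕ} (E : Set (Matrix (Fin r) (Fin r) K)) :
    Prop :=
  E.Finite ∧ (∀ e ∈ E, e ≠ 0) ∧ (∀ e ∈ E, ∀ e' ∈ E, e ≠ e' → e * e' = 0) ∧
  (∑ᶠ e ∈ E, e) = 1

/-!
Maximality of `E` makes every `e ∈ E` primitive in `M`: an idempotent `q ∈ M` with
`q e = q ∉ {0, e}` would split `e` into `q + (e - q)` and give a longer complete set.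
If the characteristic polynomial of `B ∈ M` splits, write it as a product of pairwise coprime
powers `(X - c)^k`. For coprime `f, g` with `(f g)(B) e = 0` and `u f + v g = 1`, the element
`(v g)(B) e` is an idempotent below `e`, so `f(B) e = 0` or `g(B) e = 0`; peeling off factors
leaves a single `c` with `(B - c)^k e = 0`, i.e. `e B - c e` nilpotent.
Conversely, if `(B - c_e) e` is nilpotent for each `e`, then `∏ (X - c_e)^(k_e)` kills `B`
because `∑ e = 1`, and every eigenvalue of `B` over an algebraic closure is a root of it.
-/

section PrimitiveIdempotent

open Polynomial

variable {K R : Type*} [Field K] [Ring R] [Algebra K R] {a e : R}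

theorem isNilpotent_mul_iff_exists_pow_mul_eq_zero {x : R} (hxe : Commute x e)
    (he : IsIdempotentElem e) : IsNilpotent (x * e) ↔ ∃ m : ℕ, x ^ m * e = 0 := by
  constructor
  · rintro ⟨m, hm⟩
    refine ⟨m, ?_⟩
    calc x ^ m * e = x ^ m * e ^ m * e := by rw [mul_assoc, ← pow_succ, he.pow_succ_eq]
      _ = 0 := by rw [← hxe.mul_pow, hm, zero_mul]
  · rintro ⟨m, hm⟩
    refine ⟨m + 1, ?_⟩
    rw [hxe.mul_pow, he.pow_succ_eq, pow_succ', mul_assoc, hm, mul_zero]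

theorem aeval_mul_aeval_mul (hea : Commute e a) (he : IsIdempotentElem e) (s t : K[X]) :
    aeval a s * e * (aeval a t * e) = aeval a (s * t) * e := by
  have hec : Commute e (aeval a t) :=
    Algebra.commute_of_mem_adjoin_singleton_of_commute (aeval_mem_adjoin_singleton K a) hea
  rw [map_mul, mul_assoc, ← mul_assoc e, hec.eq, mul_assoc, he.eq, mul_assoc]

theorem aeval_mul_eq_zero_or_of_isCoprime (hea : Commute e a) (he : IsIdempotentElem e)
    (hprim : ∀ s : K[X], IsIdempotentElem (aeval a s * e) →
      aeval a s * e = 0 ∨ aeval a s * e = e)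
    {f g : K[X]} (hfg : IsCoprime f g) (h : aeval a (f * g) * e = 0) :
    aeval a f * e = 0 ∨ aeval a g * e = 0 := by
  obtain ⟨u, v, huv⟩ := hfg
  have hsplit : ∀ s : K[X], aeval a (s * (f * g)) * e = 0 := fun s => by
    rw [map_mul, mul_assoc, h, mul_zero]
  -- `v g` is an idempotent modulo `f g`, and so `(v g)(a) e` is an idempotent.
  have hidem : IsIdempotentElem (aeval a (v * g) * e) := by
    have hvg : v * g * (v * g) = v * g - u * v * (f * g) := by linear_combination (v * g) * huv
    rw [IsIdempotentElem, aeval_mul_aeval_mul hea he, hvg, map_sub, sub_mul, hsplit, sub_zero]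
  rcases hprim _ hidem with h0 | he'
  · right
    have hg : g = u * (f * g) + g * (v * g) := by linear_combination (-g) * huv
    rw [hg, map_add, add_mul, hsplit, zero_add, map_mul, mul_assoc, h0, mul_zero]
  · left
    rw [← he', ← mul_assoc, ← map_mul, show f * (v * g) = v * (f * g) by ring, hsplit]

theorem exists_pow_mul_eq_zero_of_aeval_prod_mul_eq_zero (hea : Commute e a)
    (he : IsIdempotentElem e)
    (hprim : ∀ s : K[X], IsIdempotentElem (aeval a s * e) →
      aeval a s * e = 0 ∨ aeval a s * e = e)
    (k : K → ℕ) (S : Finset K)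
    (h : aeval a (∏ c ∈ S, (Polynomial.X - Polynomial.C c) ^ k c) * e = 0) :
    ∃ c : K, ∃ m : ℕ, (a - algebraMap K R c) ^ m * e = 0 := by
  classical
  induction S using Finset.induction_on with
  | empty => exact ⟨0, 0, by simpa using h⟩
  | insert c S hcS ih =>
    have hcop : IsCoprime ((Polynomial.X - Polynomial.C c) ^ k c)
        (∏ d ∈ S, (Polynomial.X - Polynomial.C d) ^ k d) :=
      IsCoprime.prod_right fun d hd => IsCoprime.pow <| isCoprime_X_sub_C_of_isUnit_sub
        (sub_ne_zero.mpr (ne_of_mem_of_not_mem hd hcS).symm).isUnit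
    rw [Finset.prod_insert hcS] at h
    rcases aeval_mul_eq_zero_or_of_isCoprime hea he hprim hcop h with hc | hS
    · exact ⟨c, k c, by simpa using hc⟩
    · exact ih hS

theorem exists_isNilpotent_sub_algebraMap_mul (hea : Commute e a) (he : IsIdempotentElem e)
    (hprim : ∀ s : K[X], IsIdempotentElem (aeval a s * e) →
      aeval a s * e = 0 ∨ aeval a s * e = e)
    {p : K[X]} (hp : p.Monic) (hs : p.Splits) (h : aeval a p = 0) :
    ∃ c : K, IsNilpotent ((a - algebraMap K R c) * e) := by
  classical
  rw [hs.eq_prod_roots_of_monic hp, Finset.prod_multiset_map_count] at h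
  obtain ⟨c, m, hm⟩ := exists_pow_mul_eq_zero_of_aeval_prod_mul_eq_zero hea he hprim
    p.roots.count p.roots.toFinset (by rw [h, zero_mul])
  exact ⟨c, (isNilpotent_mul_iff_exists_pow_mul_eq_zero
    (hea.symm.sub_left (Algebra.commute_algebraMap_left c e)) he).mpr ⟨m, hm⟩⟩

end PrimitiveIdempotent

open Polynomial in
theorem _root_.Matrix.charpoly_splits_of_aeval_eq_zero {n K : Type*} [Fintype n] [DecidableEq n]
    [Field K] (A : Matrix n n K) {p : K[X]} (hp : p ≠ 0) (hs : p.Splits) (h : aeval A p = 0) :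
    A.charpoly.Splits := by
  let L := AlgebraicClosure K
  refine Splits.of_splits_map (algebraMap K L) (IsAlgClosed.splits _) fun μ hμ => ?_
  rw [← Matrix.charpoly_map, mem_roots (Matrix.charpoly_monic _).ne_zero,
    ← Matrix.mem_spectrum_iff_isRoot_charpoly] at hμ
  have hp0 : (p.map (algebraMap K L)).eval μ ∈ spectrum L (0 : Matrix n n L) := by
    have : aeval (A.map (algebraMap K L)) (p.map (algebraMap K L)) = 0 := by
      rw [Polynomial.aeval_map_algebraMap,
        show A.map (algebraMap K L) = (Algebra.ofId K L).mapMatrix A from rfl,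
        aeval_algHom_apply, h, map_zero]
    exact this ▸ spectrum.subset_polynomial_aeval _ _ ⟨μ, hμ, rfl⟩
  have hroot : (p.map (algebraMap K L)).IsRoot μ := by
    by_contra hne
    rw [spectrum.mem_iff, sub_zero] at hp0
    exact hp0 ((isUnit_iff_ne_zero.mpr hne).map _)
  exact hs.mem_range_of_isRoot hp hroot

namespace IsMatCoid

variable {K : Type*} [CommRing K] {r : ℕ} {E : Set (Matrix (Fin r) (Fin r) K)}
  {e q : Matrix (Fin r) (Fin r) K}

theorem add_finsum_sdiff_singleton (hE : IsMatCoid E) (he : e ∈ E) :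
    e + ∑ᶠ b ∈ E \ {e}, b = 1 := by
  rw [← finsum_mem_insert (fun b => b) (show e ∉ E \ {e} from fun h => h.2 rfl) hE.1.sdiff,
    Set.insert_sdiff_singleton, Set.insert_eq_of_mem he]
  exact hE.2.2.2

theorem isIdempotentElem (hE : IsMatCoid E) (he : e ∈ E) : IsIdempotentElem e := by
  have h := congrArg (e * ·) (hE.add_finsum_sdiff_singleton he)
  rwa [mul_add, mul_finsum_mem' _ _ hE.1.sdiff, mul_one,
    finsum_mem_eq_zero_of_forall_eq_zero fun b hb => hE.2.2.1 e he b hb.1 (Ne.symm hb.2),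
    add_zero] at h

theorem eq_zero_of_forall_mul_eq_zero (hE : IsMatCoid E) {x : Matrix (Fin r) (Fin r) K}
    (h : ∀ e ∈ E, x * e = 0) : x = 0 := by
  rw [← mul_one x, ← hE.2.2.2, mul_finsum_mem' _ _ hE.1]
  exact finsum_mem_eq_zero_of_forall_eq_zero h

theorem notMem_sdiff_singleton (hE : IsMatCoid E) (he : e ∈ E) {x : Matrix (Fin r) (Fin r) K}
    (hxe : x * e = x) (hx : x ≠ 0) : x ∉ E \ {e} := fun hxE =>
  hx (by rw [← hxe]; exact hE.2.2.1 x hxE.1 e he hxE.2)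

theorem insert_insert_sdiff_singleton (hE : IsMatCoid E) (he : e ∈ E) (hq : IsIdempotentElem q)
    (hqe : q * e = q) (heq : e * q = q) (hq0 : q ≠ 0) (hqe' : q ≠ e) :
    IsMatCoid (insert q (insert (e - q) (E \ {e}))) ∧
      (insert q (insert (e - q) (E \ {e}))).ncard = E.ncard + 1 := by
  have hee : e * e = e := (hE.isIdempotentElem he).eq
  have hpe : (e - q) * e = e - q := by rw [sub_mul, hee, hqe]
  have hep : e * (e - q) = e - q := by rw [mul_sub, hee, heq]
  have hqp : q * (e - q) = 0 := by rw [mul_sub, hqe, hq.eq, sub_self]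
  have hpq : (e - q) * q = 0 := by rw [sub_mul, heq, hq.eq, sub_self]
  have hp0 : e - q ≠ 0 := sub_ne_zero.mpr hqe'.symm
  have hp_notMem := hE.notMem_sdiff_singleton he hpe hp0
  have hq_notMem : q ∉ insert (e - q) (E \ {e}) := by
    rintro (h | h)
    · exact hq0 (by rw [← hq.eq]; nth_rw 2 [h]; exact hqp)
    · exact hE.notMem_sdiff_singleton he hqe hq0 h
  have horth : ∀ x, x * e = x → e * x = x → ∀ b ∈ E \ {e}, x * b = 0 ∧ b * x = 0 :=
    fun x hxe hex b hb =>
      ⟨by rw [← hxe, mul_assoc, hE.2.2.1 e he b hb.1 (Ne.symm hb.2), mul_zero],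
        by rw [← hex, ← mul_assoc, hE.2.2.1 b hb.1 e he hb.2, zero_mul]⟩
  refine ⟨⟨(hE.1.sdiff.insert _).insert _, ?_, ?_, ?_⟩, ?_⟩
  · rintro x (rfl | rfl | hx)
    exacts [hq0, hp0, hE.2.1 x hx.1]
  · rintro x (rfl | rfl | hx) y (rfl | rfl | hy) hxy
    all_goals first
      | exact absurd rfl hxy
      | assumption
      | exact (horth _ hqe heq _ ‹_›).1
      | exact (horth _ hqe heq _ ‹_›).2
      | exact (horth _ hpe hep _ ‹_›).1
      | exact (horth _ hpe hep _ ‹_›).2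
      | exact hE.2.2.1 x hx.1 y hy.1 hxy
  · rw [finsum_mem_insert _ hq_notMem (hE.1.sdiff.insert _),
      finsum_mem_insert _ hp_notMem hE.1.sdiff, ← add_assoc, add_sub_cancel,
      hE.add_finsum_sdiff_singleton he]
  · rw [Set.ncard_insert_of_notMem hq_notMem (hE.1.sdiff.insert _),
      Set.ncard_insert_of_notMem hp_notMem hE.1.sdiff,
      Set.ncard_sdiff_singleton_add_one he hE.1]

theorem eq_zero_or_eq_of_ncard_le {M : Subalgebra K (Matrix (Fin r) (Fin r) K)}
    (hEM : E ⊆ M) (hE : IsMatCoid E)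
    (hmax : ∀ E' : Set (Matrix (Fin r) (Fin r) K), E' ⊆ M → IsMatCoid E' → E'.ncard ≤ E.ncard)
    (he : e ∈ E) (hqM : q ∈ M) (hq : IsIdempotentElem q) (hqe : q * e = q) (heq : e * q = q) :
    q = 0 ∨ q = e := by
  by_contra! h
  obtain ⟨hE', hcard⟩ := hE.insert_insert_sdiff_singleton he hq hqe heq h.1 h.2
  have hsub : insert q (insert (e - q) (E \ {e})) ⊆ M := Set.insert_subset hqM
    (Set.insert_subset (M.sub_mem (hEM he) hqM) (Set.sdiff_subset.trans hEM))
  have := hmax _ hsub hE'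
  omega

end IsMatCoid

section Matrices

variable {K : Type*} [Field K] {r : ℕ} {E : Set (Matrix (Fin r) (Fin r) K)}
  {A e : Matrix (Fin r) (Fin r) K}

theorem IsMatCoid.charpoly_splits_of_forall_isNilpotent (hE : IsMatCoid E)
    (h : ∀ e ∈ E, Commute A e ∧ ∃ c : K, IsNilpotent ((A - algebraMap K _ c) * e)) :
    A.charpoly.Splits := by
  have hpow : ∀ e ∈ E, ∃ c : K, ∃ k : ℕ, (A - algebraMap K _ c) ^ k * e = 0 := fun e he => by
    obtain ⟨hAe, c, hc⟩ := h e he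
    exact ⟨c, (isNilpotent_mul_iff_exists_pow_mul_eq_zero
      (hAe.sub_left (Algebra.commute_algebraMap_left c e)) (hE.isIdempotentElem he)).mp hc⟩
  choose! c k hk using hpow
  let P := ∏ e ∈ hE.1.toFinset, (Polynomial.X - Polynomial.C (c e)) ^ k e
  refine A.charpoly_splits_of_aeval_eq_zero (p := P)
    (Polynomial.monic_prod_of_monic _ _ fun e _ => (Polynomial.monic_X_sub_C _).pow _).ne_zero
    (Polynomial.Splits.prod fun e _ => (Polynomial.Splits.X_sub_C _).pow _)
    (hE.eq_zero_of_forall_mul_eq_zero fun e he => ?_)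
  obtain ⟨Q, hQ⟩ : _ ∣ P := Finset.dvd_prod_of_mem
    (fun e => (Polynomial.X - Polynomial.C (c e)) ^ k e) (hE.1.mem_toFinset.mpr he)
  rw [hQ, mul_comm, map_mul, mul_assoc, map_pow, map_sub, Polynomial.aeval_X,
    Polynomial.aeval_C, hk e he, mul_zero]

theorem IsMatCoid.exists_isNilpotent_of_charpoly_splits
    {M : Subalgebra K (Matrix (Fin r) (Fin r) K)} (hcomm : ∀ A ∈ M, ∀ B ∈ M, Commute A B)
    (hEM : E ⊆ M) (hE : IsMatCoid E)
    (hmax : ∀ E' : Set (Matrix (Fin r) (Fin r) K), E' ⊆ M → IsMatCoid E' → E'.ncard ≤ E.ncard)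
    (he : e ∈ E) (hA : A ∈ M) (hsplit : A.charpoly.Splits) :
    ∃ c : K, IsNilpotent ((A - algebraMap K _ c) * e) := by
  have hee := hE.isIdempotentElem he
  have hprim : ∀ s : Polynomial K, IsIdempotentElem (Polynomial.aeval A s * e) →
      Polynomial.aeval A s * e = 0 ∨ Polynomial.aeval A s * e = e := fun s hs => by
    have hsM : Polynomial.aeval A s ∈ M := Algebra.adjoin_le
      (Set.singleton_subset_iff.mpr hA) (Polynomial.aeval_mem_adjoin_singleton K A)
    exact hE.eq_zero_or_eq_of_ncard_le hEM hmax he (M.mul_mem hsM (hEM he)) hs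
      (by rw [mul_assoc, hee.eq])
      (by rw [← mul_assoc, (hcomm e (hEM he) _ hsM).eq, mul_assoc, hee.eq])
  exact exists_isNilpotent_sub_algebraMap_mul (hcomm e (hEM he) A hA) hee hprim
    (Matrix.charpoly_monic A) hsplit (Matrix.aeval_self_charpoly A)

end Matrices

/-- Proposition 3.6 f. Let `M ⊆ Mat_r(K)` be a commutative subalgebra
containing `I`, with unique maximal complete set of orthogonal idempotents `{E_1,…,E_n}`,
and let `M_i = E_iM`. Then `M_i = K·E_i ⊕ M_i^nil` for every `i` (i.e. every element of
each `M_i` is a scalar multiple of `E_i` plus a nilpotent) iff `K` contains every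
eigenvalue of every `A ∈ M` (i.e. every characteristic polynomial splits over `K`). -/
theorem scalar_plus_nilpotent_iff_splits {K : Type*} [Field K] {r : ℕ}
    (M : Subalgebra K (Matrix (Fin r) (Fin r) K))
    (hcomm : ∀ A ∈ M, ∀ B ∈ M, A * B = B * A)
    (E : Set (Matrix (Fin r) (Fin r) K)) (hEM : E ⊆ (M : Set (Matrix (Fin r) (Fin r) K)))
    (hE : IsMatCoid E)
    (hmax : ∀ E' : Set (Matrix (Fin r) (Fin r) K),
      E' ⊆ (M : Set (Matrix (Fin r) (Fin r) K)) → IsMatCoid E' → E'.ncard ≤ E.ncard) :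
    (∀ e ∈ E, ∀ B ∈ M, ∃ c : K, IsNilpotent (e * B - c • e)) ↔
      ∀ A ∈ M, Polynomial.Splits (Matrix.charpoly A) := by
  have hcomm' : ∀ A ∈ M, ∀ B ∈ M, Commute A B := hcomm
  have hblock : ∀ e ∈ E, ∀ B ∈ M, ∀ c : K, e * B - c • e = (B - algebraMap K _ c) * e :=
    fun e he B hB c => by
      rw [sub_mul, hcomm B hB e (hEM he), Algebra.algebraMap_eq_smul_one, smul_mul_assoc, one_mul]
  constructor
  · intro h A hA
    refine hE.charpoly_splits_of_forall_isNilpotent fun e he => ⟨hcomm' A hA e (hEM he), ?_⟩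
    obtain ⟨c, hc⟩ := h e he A hA
    exact ⟨c, hblock e he A hA c ▸ hc⟩
  · intro hsplit e he B hB
    obtain ⟨c, hc⟩ :=
      hE.exists_isNilpotent_of_charpoly_splits hcomm' hEM hmax he hB (hsplit B hB)
    exact ⟨c, (hblock e he B hB c).symm ▸ hc⟩

end Kleppe
end
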